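/- arXiv:2108.11728 — 5 statements merged into one kernel-verified Lean document; each statement's English description precedes it below -/
import Mathlib

section
/- Let F : ℝ → ℝ be C² with F''(x) ≥ ε > 0 for all x, and let μ be the probability measure with density proportional to exp(-F). Then for every C¹ function f with bounded derivative, Var_μ(f) ≤ ∫ |f'(x)|² / F''(x) dμ(x). -/
/-!
Let `x₀` be the critical point of `F` and `G x = ∫_{x₀}^x f'² / F''`. Cauchy–Schwarz against
the weight `F''` gives `(f x - f x₀)² ≤ (∫_{x₀}^x F'') G x = F' x · G x`. Integrating against
`e^{-F}` and integrating by parts (`(e^{-F} G)' = e^{-F} f'²/F'' - e^{-F} F' G`, with boundary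
terms of the right sign since `G` changes sign at `x₀`) bounds `∫ (f - f x₀)² dμ` by
`∫ f'²/F'' dμ`; the variance is the smallest of the quantities `∫ (f - c)² dμ`.
-/

open MeasureTheory Real Set Filter ProbabilityTheory

theorem surjective_of_le_deriv {φ : ℝ → ℝ} (hφ : Differentiable ℝ φ) {ε : ℝ}
    (hε : 0 < ε) (h : ∀ x, ε ≤ deriv φ x) : Function.Surjective φ := by
  have slope := mul_sub_le_image_sub_of_le_deriv hφ h
  refine hφ.continuous.surjective ?_ ?_
  · refine tendsto_atTop_mono' _ ?_
      (tendsto_atTop_add_const_left _ (φ 0) (tendsto_id.const_mul_atTop hε))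
    filter_upwards [eventually_ge_atTop 0] with x hx
    show φ 0 + ε * x ≤ φ x
    linarith [slope hx]
  · refine tendsto_atBot_mono' _ ?_
      (tendsto_atBot_add_const_left _ (φ 0) (tendsto_id.const_mul_atBot hε))
    filter_upwards [eventually_le_atBot 0] with x hx
    show φ x ≤ φ 0 + ε * x
    linarith [slope hx]

theorem sq_intervalIntegral_le_intervalIntegral_mul_sq_div {h w : ℝ → ℝ} (hh : Continuous h)
    (hw : Continuous w) (hw0 : ∀ x, 0 < w x) (a b : ℝ) :
    (∫ x in a..b, h x) ^ 2 ≤ (∫ x in a..b, w x) * ∫ x in a..b, h x ^ 2 / w x := by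
  wlog hab : a ≤ b generalizing a b
  · simpa only [intervalIntegral.integral_symm a b, neg_sq, neg_mul_neg] using
      this b a (le_of_not_ge hab)
  rcases hab.eq_or_lt with rfl | hlt
  · simp
  have hw' : ∀ x, w x ≠ 0 := fun x => (hw0 x).ne'
  have expand (B C : ℝ) : ∫ x in a..b, (C * h x - B * w x) ^ 2 / w x
      = C ^ 2 * (∫ x in a..b, h x ^ 2 / w x) - 2 * C * B * (∫ x in a..b, h x)
        + B ^ 2 * ∫ x in a..b, w x := by
    have hx : ∀ x, (C * h x - B * w x) ^ 2 / w x
        = C ^ 2 * (h x ^ 2 / w x) - 2 * C * B * h x + B ^ 2 * w x := fun x => by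
      field_simp [hw' x]; ring
    simp_rw [hx]
    rw [intervalIntegral.integral_add, intervalIntegral.integral_sub,
      intervalIntegral.integral_const_mul, intervalIntegral.integral_const_mul,
      intervalIntegral.integral_const_mul]
    all_goals exact Continuous.intervalIntegrable (by fun_prop (disch := exact hw')) a b
  have hC : 0 < ∫ x in a..b, w x :=
    intervalIntegral.intervalIntegral_pos_of_pos (hw.intervalIntegrable a b) hw0 hlt
  -- discriminant: `0 ≤ ∫ (C h - B w)² / w = C (C A - B²)` with `C = ∫ w`, `B = ∫ h`
  have := expand (∫ x in a..b, h x) (∫ x in a..b, w x) ▸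
    intervalIntegral.integral_nonneg hab fun x _ => div_nonneg (sq_nonneg _) (hw0 x).le
  nlinarith

theorem intervalIntegral_exp_neg_mul_deriv_mul_primitive_le {F g : ℝ → ℝ}
    (hF : ContDiff ℝ 1 F) (hg : Continuous g) (hg0 : ∀ x, 0 ≤ g x) {a c b : ℝ}
    (hac : a ≤ c) (hcb : c ≤ b) :
    ∫ x in a..b, exp (-F x) * (deriv F x * ∫ t in c..x, g t)
      ≤ ∫ x in a..b, exp (-F x) * g x := by
  set G := fun x => ∫ t in c..x, g t
  have hG : ∀ x, HasDerivAt G (g x) x := fun x =>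
    (hg.integral_hasStrictDerivAt c x).hasDerivAt
  have hGc : Continuous G := continuous_iff_continuousAt.mpr fun x => (hG x).continuousAt
  have hF1 := hF.continuous_deriv le_rfl
  have hH : ∀ x, HasDerivAt (fun x => exp (-F x) * G x)
      (exp (-F x) * g x - exp (-F x) * (deriv F x * G x)) x := fun x => by
    have hexp : HasDerivAt (fun x => exp (-F x)) (exp (-F x) * -deriv F x) x :=
      (hF.differentiable one_ne_zero x).hasDerivAt.neg.exp
    exact (hexp.mul (hG x)).congr_deriv (by ring)
  have ftc := intervalIntegral.integral_eq_sub_of_hasDerivAt (fun x _ => hH x)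
    (Continuous.intervalIntegrable (by fun_prop) a b)
  rw [intervalIntegral.integral_sub (Continuous.intervalIntegrable (by fun_prop) a b)
    (Continuous.intervalIntegrable (by fun_prop) a b)] at ftc
  have hGb : 0 ≤ G b := intervalIntegral.integral_nonneg hcb fun x _ => hg0 x
  have hGa : G a ≤ 0 := by
    rw [show G a = _ from intervalIntegral.integral_symm a c]
    exact neg_nonpos.mpr (intervalIntegral.integral_nonneg hac fun x _ => hg0 x)
  nlinarith [exp_pos (-F a), exp_pos (-F b)]

theorem integral_le_of_forall_intervalIntegral_le {A : ℝ → ℝ} (hA : LocallyIntegrable A)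
    (hA0 : ∀ x, 0 ≤ A x) {K : ℝ} (c : ℝ)
    (h : ∀ a b, a ≤ c → c ≤ b → ∫ x in a..b, A x ≤ K) : ∫ x, A x ≤ K := by
  have hK : ∀ᶠ R in atTop, ∫ x in -R..R, A x ≤ K := by
    filter_upwards [eventually_ge_atTop |c|] with R hR
    exact h _ _ (neg_le.mp ((neg_le_abs c).trans hR)) ((le_abs_self c).trans hR)
  have hint : Integrable A := by
    refine integrable_of_intervalIntegral_norm_bounded K
      (fun R => (hA.integrableOn_isCompact isCompact_Icc).mono_set Ioc_subset_Icc_self)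
      tendsto_neg_atTop_atBot tendsto_id ?_
    simpa only [id, norm_eq_abs, abs_of_nonneg (hA0 _)] using hK
  exact le_of_tendsto
    (intervalIntegral_tendsto_integral hint tendsto_neg_atTop_atBot tendsto_id) hK

theorem integral_sq_sub_integral_le {Ω : Type*} [MeasurableSpace Ω] {μ : Measure Ω}
    [IsProbabilityMeasure μ] {X : Ω → ℝ} (hX : AEStronglyMeasurable X μ) (c : ℝ) :
    ∫ ω, (X ω - ∫ ω', X ω' ∂μ) ^ 2 ∂μ ≤ ∫ ω, (X ω - c) ^ 2 ∂μ := by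
  rw [← variance_eq_integral hX.aemeasurable, ← variance_sub_const hX c]
  exact variance_le_expectation_sq (hX.sub aestronglyMeasurable_const)

theorem integral_tilted_eq_div {α : Type*} [MeasurableSpace α] {μ : Measure α}
    (f g : α → ℝ) :
    ∫ x, g x ∂(μ.tilted f) = (∫ x, exp (f x) * g x ∂μ) / ∫ x, exp (f x) ∂μ := by
  rw [integral_tilted, ← integral_div]
  congr with x
  rw [smul_eq_mul, div_mul_eq_mul_div]

theorem integral_exp_neg_mul_sq_sub_le {F f : ℝ → ℝ} (hF : ContDiff ℝ 2 F)
    (hF2 : ∀ x, 0 < deriv (deriv F) x) {x₀ : ℝ} (hx₀ : deriv F x₀ = 0) (hf : ContDiff ℝ 1 f)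
    (hB : Integrable fun x => exp (-F x) * (deriv f x ^ 2 / deriv (deriv F) x)) :
    ∫ x, exp (-F x) * (f x - f x₀) ^ 2
      ≤ ∫ x, exp (-F x) * (deriv f x ^ 2 / deriv (deriv F) x) := by
  have hF1 : ContDiff ℝ 1 (deriv F) := hF.deriv'
  have hF2c : Continuous (deriv (deriv F)) := hF1.continuous_deriv le_rfl
  have hf1 : Continuous (deriv f) := hf.continuous_deriv le_rfl
  have hg : Continuous fun x => deriv f x ^ 2 / deriv (deriv F) x :=
    (hf1.pow 2).div hF2c fun x => (hF2 x).ne'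
  set G := fun x => ∫ t in x₀..x, deriv f t ^ 2 / deriv (deriv F) t
  have hGc : Continuous G :=
    intervalIntegral.continuous_primitive (fun _ _ => hg.intervalIntegrable _ _) x₀
  have hcs : ∀ x, (f x - f x₀) ^ 2 ≤ deriv F x * G x := fun x => by
    have := sq_intervalIntegral_le_intervalIntegral_mul_sq_div hf1 hF2c hF2 x₀ x
    rwa [intervalIntegral.integral_deriv_eq_sub (fun y _ => hf.differentiable one_ne_zero y)
      (hf1.intervalIntegrable _ _), intervalIntegral.integral_deriv_eq_sub
      (fun y _ => hF1.differentiable one_ne_zero y) (hF2c.intervalIntegrable _ _), hx₀,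
      sub_zero] at this
  refine integral_le_of_forall_intervalIntegral_le
    (Continuous.locallyIntegrable (by fun_prop)) (fun x => by positivity) x₀ fun a b ha hb => ?_
  calc ∫ x in a..b, exp (-F x) * (f x - f x₀) ^ 2
      ≤ ∫ x in a..b, exp (-F x) * (deriv F x * G x) :=
        intervalIntegral.integral_mono_on (ha.trans hb)
          (Continuous.intervalIntegrable (by fun_prop) _ _)
          (Continuous.intervalIntegrable (by fun_prop) _ _)
          fun x _ => mul_le_mul_of_nonneg_left (hcs x) (exp_pos _).le
    _ ≤ ∫ x in a..b, exp (-F x) * (deriv f x ^ 2 / deriv (deriv F) x) :=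
        intervalIntegral_exp_neg_mul_deriv_mul_primitive_le (hF.of_le one_le_two) hg
          (fun x => div_nonneg (sq_nonneg _) (hF2 x).le) ha hb
    _ ≤ ∫ x, exp (-F x) * (deriv f x ^ 2 / deriv (deriv F) x) := by
        rw [intervalIntegral.integral_of_le (ha.trans hb)]
        exact setIntegral_le_integral hB (ae_of_all _ fun x => by
          have := hF2 x
          positivity)

/-- One-dimensional Brascamp–Lieb inequality:
if `F'' ≥ ε > 0` and `dμ = Z⁻¹ e^{-F} dx`, then for every C¹ function `f`
with bounded derivative, `Var_μ f ≤ ∫ |f'|² / F'' dμ`. -/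
theorem brascamp_lieb_one_dim
    (F : ℝ → ℝ) (ε : ℝ) (hε : 0 < ε)
    (hF : ContDiff ℝ 2 F)
    (hF'' : ∀ x, ε ≤ deriv (deriv F) x)
    (Z : ℝ) (hZ : Z = ∫ x, Real.exp (-F x))
    (μ : Measure ℝ)
    (hμ : μ = (volume : Measure ℝ).withDensity
      (fun x => ENNReal.ofReal (Real.exp (-F x) / Z)))
    (hprob : IsProbabilityMeasure μ)
    (f : ℝ → ℝ) (hf : ContDiff ℝ 1 f)
    (M : ℝ) (hM : ∀ x, |deriv f x| ≤ M) :
    ∫ x, (f x - ∫ y, f y ∂μ) ^ 2 ∂μ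
      ≤ ∫ x, (deriv f x) ^ 2 / deriv (deriv F) x ∂μ := by
  have hF2 : ∀ x, 0 < deriv (deriv F) x := fun x => hε.trans_le (hF'' x)
  obtain ⟨x₀, hx₀⟩ :=
    surjective_of_le_deriv (hF.deriv'.differentiable one_ne_zero) hε hF'' 0
  have hμF : μ = volume.tilted fun x => -F x := by rw [hμ, hZ]; rfl
  -- otherwise `Z = 0` by convention, so the density and hence `μ` vanish
  have hexp : Integrable fun x => exp (-F x) := by
    by_contra h
    exact IsProbabilityMeasure.ne_zero μ (hμF ▸ tilted_of_not_integrable h)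
  have hB : Integrable fun x => exp (-F x) * (deriv f x ^ 2 / deriv (deriv F) x) := by
    refine hexp.mul_bdd (c := M ^ 2 / ε) (Continuous.aestronglyMeasurable ?_)
      (ae_of_all _ fun x => ?_)
    · exact ((hf.continuous_deriv le_rfl).pow 2).div (hF.deriv'.continuous_deriv le_rfl)
        fun x => (hF2 x).ne'
    · rw [norm_div, norm_pow, norm_eq_abs, norm_eq_abs, abs_of_pos (hF2 x)]
      exact div_le_div₀ (sq_nonneg M) (pow_le_pow_left₀ (abs_nonneg _) (hM x) 2) hε (hF'' x)
  calc ∫ x, (f x - ∫ y, f y ∂μ) ^ 2 ∂μ ≤ ∫ x, (f x - f x₀) ^ 2 ∂μ :=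
        integral_sq_sub_integral_le hf.continuous.aestronglyMeasurable _
    _ = (∫ x, exp (-F x) * (f x - f x₀) ^ 2) / Z := by rw [hμF, integral_tilted_eq_div, hZ]
    _ ≤ (∫ x, exp (-F x) * (deriv f x ^ 2 / deriv (deriv F) x)) / Z :=
        div_le_div_of_nonneg_right (integral_exp_neg_mul_sq_sub_le hF hF2 hx₀ hf hB)
          (hZ ▸ integral_nonneg fun x => (exp_pos _).le)
    _ = ∫ x, (deriv f x) ^ 2 / deriv (deriv F) x ∂μ := by rw [hμF, integral_tilted_eq_div, hZ]
end

section
/- Let μ be a probability measure on ℝ^Λ (Λ finite) satisfying the logarithmic Sobolev inequality ∫ f² ln f² dμ - (∫ f² dμ) ln(∫ f² dμ) ≤ (2/ε) ∫ |∇f|² dμ for all smooth f, and suppose ∫ x_k² dμ ≤ D < ∞ for a fixed coordinate k. Then for all a ∈ [0, ε/2), ∫ exp(a x_k²) dμ ≤ exp( aD / (1 - 2a/ε) ). -/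
open MeasureTheory Real Filter Set Topology

set_option maxHeartbeats 1000000 in
/-- Herbst argument: a log-Sobolev inequality with constant `2/ε` and a second
moment bound `∫ x_k² dμ ≤ D` imply the Gaussian integrability estimate
`∫ exp(a x_k²) dμ ≤ exp(aD/(1 - 2a/ε))` for all `a ∈ [0, ε/2)`. -/
theorem herbst_gaussian_integrability
    {Λ : Type*} [Fintype Λ]
    (μ : Measure (Λ → ℝ)) (hprob : IsProbabilityMeasure μ)
    (ε : ℝ) (hε : 0 < ε)
    (hLSI : ∀ f : (Λ → ℝ) → ℝ, ContDiff ℝ (⊤ : ℕ∞) f →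
      (∫ x, (f x) ^ 2 * Real.log ((f x) ^ 2) ∂μ)
        - (∫ x, (f x) ^ 2 ∂μ) * Real.log (∫ x, (f x) ^ 2 ∂μ)
        ≤ (2 / ε) * ∫ x, ‖fderiv ℝ f x‖ ^ 2 ∂μ)
    (k : Λ) (D : ℝ) (hD : ∫ x, (x k) ^ 2 ∂μ ≤ D) :
    ∀ a : ℝ, 0 ≤ a → a < ε / 2 →
      ∫ x, Real.exp (a * (x k) ^ 2) ∂μ ≤ Real.exp (a * D / (1 - 2 * a / ε)) := by
  intro a ha0 haε
  rcases eq_or_lt_of_le ha0 with rfl | hapos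
  · simp
  by_cases hInt : Integrable (fun x => Real.exp (a * (x k) ^ 2)) μ
  swap
  · rw [integral_undef hInt]; positivity
  -- abbreviations (stated explicitly throughout)
  have hcont : ∀ b : ℝ, Continuous (fun x : Λ → ℝ => Real.exp (b * (x k) ^ 2)) :=
    fun b => Real.continuous_exp.comp (continuous_const.mul ((continuous_apply k).pow 2))
  have hmeas : ∀ b : ℝ, AEStronglyMeasurable (fun x : Λ → ℝ => Real.exp (b * (x k) ^ 2)) μ :=
    fun b => (hcont b).aestronglyMeasurable
  have hmeasI : ∀ b : ℝ,
      AEStronglyMeasurable (fun x : Λ → ℝ => (x k) ^ 2 * Real.exp (b * (x k) ^ 2)) μ :=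
    fun b => (((continuous_apply k).pow 2).mul (hcont b)).aestronglyMeasurable
  -- integrability of exp(b t) for b ≤ a
  have hIntb : ∀ b : ℝ, b ≤ a → Integrable (fun x => Real.exp (b * (x k) ^ 2)) μ := by
    intro b hb
    refine hInt.mono (hmeas b) (Eventually.of_forall fun x => ?_)
    rw [Real.norm_eq_abs, Real.norm_eq_abs, abs_of_pos (exp_pos _), abs_of_pos (exp_pos _)]
    exact Real.exp_le_exp.mpr (mul_le_mul_of_nonneg_right hb (sq_nonneg _))
  -- integrability of t·exp(b t) for b < a
  have hIntI : ∀ b : ℝ, b < a →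
      Integrable (fun x => (x k) ^ 2 * Real.exp (b * (x k) ^ 2)) μ := by
    intro b hb
    have hc : 0 < a - b := by linarith
    refine (hInt.div_const (a - b)).mono (hmeasI b) (Eventually.of_forall fun x => ?_)
    have ht0 : (0:ℝ) ≤ (x k) ^ 2 := sq_nonneg _
    rw [Real.norm_eq_abs, Real.norm_eq_abs, abs_of_nonneg (by positivity),
      abs_of_nonneg (by positivity)]
    have h2 : (x k) ^ 2 ≤ Real.exp ((a - b) * (x k) ^ 2) / (a - b) :=
      (le_div_iff₀ hc).2 (by nlinarith [Real.add_one_le_exp ((a - b) * (x k) ^ 2)])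
    calc (x k) ^ 2 * Real.exp (b * (x k) ^ 2)
        ≤ Real.exp ((a - b) * (x k) ^ 2) / (a - b) * Real.exp (b * (x k) ^ 2) :=
          mul_le_mul_of_nonneg_right h2 (exp_pos _).le
      _ = Real.exp (a * (x k) ^ 2) / (a - b) := by
          rw [div_mul_eq_mul_div, ← Real.exp_add]; ring_nf
  -- derivative of h
  have hderiv : ∀ b : ℝ, b ∈ Set.Ico (0:ℝ) a →
      HasDerivAt (fun b => ∫ x, Real.exp (b * (x k) ^ 2) ∂μ)
        (∫ x, (x k) ^ 2 * Real.exp (b * (x k) ^ 2) ∂μ) b := by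
    rintro b ⟨hb0, hba⟩
    have hδ0 : 0 < (a - b) / 2 := by linarith
    have hb1 : b + (a - b) / 2 < a := by linarith
    have keyd := hasDerivAt_integral_of_dominated_loc_of_deriv_le (𝕜 := ℝ) (μ := μ)
      (F := fun (b : ℝ) (x : Λ → ℝ) => Real.exp (b * (x k) ^ 2))
      (F' := fun (b : ℝ) (x : Λ → ℝ) => (x k) ^ 2 * Real.exp (b * (x k) ^ 2))
      (x₀ := b)
      (bound := fun x : Λ → ℝ => (x k) ^ 2 * Real.exp ((b + (a - b) / 2) * (x k) ^ 2))
      (Metric.ball_mem_nhds b hδ0) (Eventually.of_forall fun c => hmeas c) (hIntb b hba.le) (hmeasI b)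
      ?_ (hIntI _ hb1) ?_
    · exact keyd.2
    · refine Eventually.of_forall fun x c hc => ?_
      have hcb : c ≤ b + (a - b) / 2 := by
        rw [Metric.mem_ball, Real.dist_eq, abs_lt] at hc; linarith [hc.2]
      rw [Real.norm_eq_abs, abs_of_nonneg (by positivity)]
      exact mul_le_mul_of_nonneg_left
        (Real.exp_le_exp.mpr (mul_le_mul_of_nonneg_right hcb (sq_nonneg _))) (sq_nonneg _)
    · refine Eventually.of_forall fun x c _ => ?_
      simpa [mul_comm] using (((hasDerivAt_id c).mul_const ((x k) ^ 2)).exp)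
  -- h b ≥ 1 for 0 ≤ b ≤ a
  have hone : ∀ b : ℝ, 0 ≤ b → b ≤ a → 1 ≤ ∫ x, Real.exp (b * (x k) ^ 2) ∂μ := by
    intro b hb0 hba
    have h1 : ∫ x, (1:ℝ) ∂μ ≤ ∫ x, Real.exp (b * (x k) ^ 2) ∂μ := by
      refine integral_mono (integrable_const 1) (hIntb b hba) fun x => ?_
      have : (0:ℝ) ≤ b * (x k) ^ 2 := by positivity
      nlinarith [Real.add_one_le_exp (b * (x k) ^ 2)]
    simpa using h1
  have hpos : ∀ b : ℝ, 0 ≤ b → b ≤ a → 0 < ∫ x, Real.exp (b * (x k) ^ 2) ∂μ :=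
    fun b hb0 hba => lt_of_lt_of_le one_pos (hone b hb0 hba)
  have hεne : ε ≠ 0 := ne_of_gt hε
  have hInonneg : ∀ b : ℝ, 0 ≤ ∫ x, (x k) ^ 2 * Real.exp (b * (x k) ^ 2) ∂μ :=
    fun b => integral_nonneg fun x => by positivity
  -- key differential inequality from LSI
  have key : ∀ b : ℝ, 0 < b → b < a →
      b * (1 - 2 * b / ε) * (∫ x, (x k) ^ 2 * Real.exp (b * (x k) ^ 2) ∂μ)
        ≤ (∫ x, Real.exp (b * (x k) ^ 2) ∂μ) * Real.log (∫ x, Real.exp (b * (x k) ^ 2) ∂μ) := by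
    intro b hb0 hba
    have hsmooth : ContDiff ℝ (⊤ : ℕ∞) (fun x : Λ → ℝ => Real.exp (b * (x k) ^ 2 / 2)) := by
      have hfe : (fun x : Λ → ℝ => Real.exp (b * (x k) ^ 2 / 2))
          = fun x : Λ → ℝ => Real.exp (b / 2 * ((x k) * (x k))) := by
        funext y; congr 1; ring
      rw [hfe]
      exact Real.contDiff_exp.comp (contDiff_const.mul
        (((ContinuousLinearMap.proj k : (Λ → ℝ) →L[ℝ] ℝ).contDiff).mul
          ((ContinuousLinearMap.proj k : (Λ → ℝ) →L[ℝ] ℝ).contDiff)))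
    have hsq : ∀ x : Λ → ℝ, (Real.exp (b * (x k) ^ 2 / 2)) ^ 2 = Real.exp (b * (x k) ^ 2) := by
      intro x; rw [sq, ← Real.exp_add]; congr 1; ring
    have hfd : ∀ x : Λ → ℝ, fderiv ℝ (fun x : Λ → ℝ => Real.exp (b * (x k) ^ 2 / 2)) x
        = (Real.exp (b * (x k) ^ 2 / 2) * (b / 2 * (x k + x k)))
          • (ContinuousLinearMap.proj k : (Λ → ℝ) →L[ℝ] ℝ) := by
      intro x
      have h1 : HasFDerivAt (fun x : Λ → ℝ => x k)
          (ContinuousLinearMap.proj k : (Λ → ℝ) →L[ℝ] ℝ) x :=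
        (ContinuousLinearMap.proj k : (Λ → ℝ) →L[ℝ] ℝ).hasFDerivAt
      have h2 := ((h1.mul h1).const_mul (b / 2)).exp
      have hfe : (fun x : Λ → ℝ => Real.exp (b * (x k) ^ 2 / 2))
          = fun x : Λ → ℝ => Real.exp (b / 2 * (x k * x k)) := by
        funext y; congr 1; ring
      rw [hfe]
      refine HasFDerivAt.fderiv ?_
      refine h2.congr_fderiv ?_
      ext y
      simp [ContinuousLinearMap.proj]
      ring_nf
    have hproj : ‖(ContinuousLinearMap.proj k : (Λ → ℝ) →L[ℝ] ℝ)‖ ≤ 1 := by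
      refine ContinuousLinearMap.opNorm_le_bound _ zero_le_one fun x => ?_
      simpa using norm_le_pi_norm x k
    have hgrad : ∫ x, ‖fderiv ℝ (fun x : Λ → ℝ => Real.exp (b * (x k) ^ 2 / 2)) x‖ ^ 2 ∂μ
        ≤ b ^ 2 * ∫ x, (x k) ^ 2 * Real.exp (b * (x k) ^ 2) ∂μ := by
      rw [← integral_const_mul]
      refine integral_mono_of_nonneg (Eventually.of_forall fun x => sq_nonneg _)
        ((hIntI b hba).const_mul (b ^ 2)) (Eventually.of_forall fun x => ?_)
      show ‖fderiv ℝ (fun x : Λ → ℝ => Real.exp (b * (x k) ^ 2 / 2)) x‖ ^ 2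
        ≤ b ^ 2 * ((x k) ^ 2 * Real.exp (b * (x k) ^ 2))
      rw [hfd x]
      have hn : ‖(Real.exp (b * (x k) ^ 2 / 2) * (b / 2 * (x k + x k)))
          • (ContinuousLinearMap.proj k : (Λ → ℝ) →L[ℝ] ℝ)‖
          ≤ |Real.exp (b * (x k) ^ 2 / 2) * (b / 2 * (x k + x k))| := by
        refine (norm_smul_le (Real.exp (b * (x k) ^ 2 / 2) * (b / 2 * (x k + x k)))
          ((ContinuousLinearMap.proj k : (Λ → ℝ) →L[ℝ] ℝ))).trans ?_
        rw [Real.norm_eq_abs]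
        exact mul_le_of_le_one_right (abs_nonneg _) hproj
      calc ‖(Real.exp (b * (x k) ^ 2 / 2) * (b / 2 * (x k + x k)))
          • (ContinuousLinearMap.proj k : (Λ → ℝ) →L[ℝ] ℝ)‖ ^ 2
          ≤ |Real.exp (b * (x k) ^ 2 / 2) * (b / 2 * (x k + x k))| ^ 2 :=
            pow_le_pow_left₀ (norm_nonneg _) hn 2
        _ = (Real.exp (b * (x k) ^ 2 / 2)) ^ 2 * (b ^ 2 * (x k) ^ 2) := by
            rw [sq_abs, mul_pow]; ring
        _ = b ^ 2 * ((x k) ^ 2 * Real.exp (b * (x k) ^ 2)) := by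
            rw [hsq x]; ring
    have hL := hLSI (fun x : Λ → ℝ => Real.exp (b * (x k) ^ 2 / 2)) hsmooth
    have e1 : ∫ x, (Real.exp (b * (x k) ^ 2 / 2)) ^ 2
          * Real.log ((Real.exp (b * (x k) ^ 2 / 2)) ^ 2) ∂μ
        = b * ∫ x, (x k) ^ 2 * Real.exp (b * (x k) ^ 2) ∂μ := by
      rw [← integral_const_mul]
      congr 1; funext x
      rw [hsq x, Real.log_exp]; ring
    have e2 : ∫ x, (Real.exp (b * (x k) ^ 2 / 2)) ^ 2 ∂μ
        = ∫ x, Real.exp (b * (x k) ^ 2) ∂μ := by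
      congr 1; funext x; exact hsq x
    rw [e1, e2] at hL
    have h3 : (2 / ε) * ∫ x, ‖fderiv ℝ (fun x : Λ → ℝ => Real.exp (b * (x k) ^ 2 / 2)) x‖ ^ 2 ∂μ
        ≤ (2 / ε) * (b ^ 2 * ∫ x, (x k) ^ 2 * Real.exp (b * (x k) ^ 2) ∂μ) :=
      mul_le_mul_of_nonneg_left hgrad (by positivity)
    have e3 : b * (1 - 2 * b / ε) * (∫ x, (x k) ^ 2 * Real.exp (b * (x k) ^ 2) ∂μ)
        = b * (∫ x, (x k) ^ 2 * Real.exp (b * (x k) ^ 2) ∂μ)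
          - 2 / ε * (b ^ 2 * ∫ x, (x k) ^ 2 * Real.exp (b * (x k) ^ 2) ∂μ) := by
      field_simp
    linarith
  -- φ and its derivative
  have hφd : ∀ b : ℝ, b ∈ Set.Ico (0:ℝ) a →
      HasDerivAt (fun b => Real.log (∫ x, Real.exp (b * (x k) ^ 2) ∂μ))
        ((∫ x, (x k) ^ 2 * Real.exp (b * (x k) ^ 2) ∂μ)
          / (∫ x, Real.exp (b * (x k) ^ 2) ∂μ)) b :=
    fun b hb => (hderiv b hb).log (ne_of_gt (hpos b hb.1 hb.2.le))
  -- H and its monotonicity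
  have hHd : ∀ b : ℝ, b ∈ Set.Ioo (0:ℝ) a →
      HasDerivAt (fun b => (1 / b - 2 / ε) * Real.log (∫ x, Real.exp (b * (x k) ^ 2) ∂μ))
        ((-(b ^ 2)⁻¹) * Real.log (∫ x, Real.exp (b * (x k) ^ 2) ∂μ)
          + (1 / b - 2 / ε) * ((∫ x, (x k) ^ 2 * Real.exp (b * (x k) ^ 2) ∂μ)
            / (∫ x, Real.exp (b * (x k) ^ 2) ∂μ))) b := by
    intro b hb
    have h1 : HasDerivAt (fun b : ℝ => 1 / b - 2 / ε) (-(b ^ 2)⁻¹) b := by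
      simpa [one_div] using (hasDerivAt_inv (ne_of_gt hb.1)).sub_const (2 / ε)
    exact h1.mul (hφd b ⟨hb.1.le, hb.2⟩)
  have hHanti : AntitoneOn
      (fun b => (1 / b - 2 / ε) * Real.log (∫ x, Real.exp (b * (x k) ^ 2) ∂μ))
      (Set.Ioo 0 a) := by
    refine antitoneOn_of_deriv_nonpos (convex_Ioo 0 a)
      (fun b hb => (hHd b hb).continuousAt.continuousWithinAt)
      (fun b hb => (hHd b (by rwa [interior_Ioo] at hb)).differentiableAt.differentiableWithinAt)
      fun b hb => ?_
    rw [interior_Ioo] at hb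
    rw [(hHd b hb).deriv]
    obtain ⟨hb0, hba⟩ := hb
    have hk := key b hb0 hba
    have hh := hpos b hb0.le hba.le
    have expand : (-(b ^ 2)⁻¹) * Real.log (∫ x, Real.exp (b * (x k) ^ 2) ∂μ)
        + (1 / b - 2 / ε) * ((∫ x, (x k) ^ 2 * Real.exp (b * (x k) ^ 2) ∂μ)
          / (∫ x, Real.exp (b * (x k) ^ 2) ∂μ))
        = (b * (1 - 2 * b / ε) * (∫ x, (x k) ^ 2 * Real.exp (b * (x k) ^ 2) ∂μ)
            - (∫ x, Real.exp (b * (x k) ^ 2) ∂μ)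
              * Real.log (∫ x, Real.exp (b * (x k) ^ 2) ∂μ))
          / (b ^ 2 * ∫ x, Real.exp (b * (x k) ^ 2) ∂μ) := by
      field_simp
      ring
    rw [expand]
    exact div_nonpos_of_nonpos_of_nonneg (by linarith) (by positivity)
  -- value at 0 and limit of H at 0⁺
  have h0 : ∫ x, Real.exp ((0:ℝ) * (x k) ^ 2) ∂μ = 1 := by simp
  have hφ0 : Real.log (∫ x, Real.exp ((0:ℝ) * (x k) ^ 2) ∂μ) = 0 := by rw [h0]; simp
  have hd0 : HasDerivAt (fun b => Real.log (∫ x, Real.exp (b * (x k) ^ 2) ∂μ))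
      (∫ x, (x k) ^ 2 * Real.exp (0 * (x k) ^ 2) ∂μ) 0 := by
    have := hφd 0 ⟨le_refl 0, hapos⟩
    rwa [h0, div_one] at this
  have hI0 : ∫ x, (x k) ^ 2 * Real.exp ((0:ℝ) * (x k) ^ 2) ∂μ = ∫ x, (x k) ^ 2 ∂μ := by
    congr 1; funext x; simp
  have hslope : Tendsto (fun b => Real.log (∫ x, Real.exp (b * (x k) ^ 2) ∂μ) / b)
      (𝓝[>] 0) (𝓝 (∫ x, (x k) ^ 2 * Real.exp (0 * (x k) ^ 2) ∂μ)) := by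
    have t1 := (hasDerivAt_iff_tendsto_slope.1 hd0).mono_left
      (nhdsWithin_mono 0 fun x hx => ne_of_gt hx)
    refine t1.congr fun b => ?_
    rw [slope_def_field]
    rw [hφ0]
    simp [div_eq_mul_inv]
  have hφcont : Tendsto (fun b => Real.log (∫ x, Real.exp (b * (x k) ^ 2) ∂μ))
      (𝓝[>] 0) (𝓝 0) := by
    have := hd0.continuousAt.tendsto.mono_left
      (nhdsWithin_le_nhds : 𝓝[>] (0:ℝ) ≤ 𝓝 0)
    rwa [hφ0] at this
  have hHlim : Tendsto
      (fun b => (1 / b - 2 / ε) * Real.log (∫ x, Real.exp (b * (x k) ^ 2) ∂μ))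
      (𝓝[>] 0) (𝓝 (∫ x, (x k) ^ 2 * Real.exp (0 * (x k) ^ 2) ∂μ)) := by
    have t2 : Tendsto (fun b => Real.log (∫ x, Real.exp (b * (x k) ^ 2) ∂μ) / b
        - 2 / ε * Real.log (∫ x, Real.exp (b * (x k) ^ 2) ∂μ)) (𝓝[>] 0)
        (𝓝 ((∫ x, (x k) ^ 2 * Real.exp (0 * (x k) ^ 2) ∂μ) - 2 / ε * 0)) :=
      hslope.sub (hφcont.const_mul (2 / ε))
    rw [mul_zero, sub_zero] at t2
    refine t2.congr fun b => ?_
    ring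
  -- H ≤ D on (0, a)
  have hHleD : ∀ b : ℝ, b ∈ Set.Ioo (0:ℝ) a →
      (1 / b - 2 / ε) * Real.log (∫ x, Real.exp (b * (x k) ^ 2) ∂μ) ≤ D := by
    intro b hb
    have hle : (1 / b - 2 / ε) * Real.log (∫ x, Real.exp (b * (x k) ^ 2) ∂μ)
        ≤ ∫ x, (x k) ^ 2 * Real.exp (0 * (x k) ^ 2) ∂μ := by
      refine ge_of_tendsto hHlim ?_
      filter_upwards [Ioo_mem_nhdsGT_of_mem ⟨le_refl (0:ℝ), hb.1⟩] with c hc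
      exact hHanti ⟨hc.1, hc.2.trans hb.2⟩ hb hc.2.le
    rw [hI0] at hle
    linarith
  -- main bound on (0, a)
  have hmain : ∀ b : ℝ, b ∈ Set.Ioo (0:ℝ) a →
      ∫ x, Real.exp (b * (x k) ^ 2) ∂μ ≤ Real.exp (b * D / (1 - 2 * b / ε)) := by
    intro b hb
    have h1 : 0 < 1 - 2 * b / ε := by
      rw [sub_pos, div_lt_one hε]; linarith [hb.2]
    have h2 : Real.log (∫ x, Real.exp (b * (x k) ^ 2) ∂μ) ≤ b * D / (1 - 2 * b / ε) := by
      have h3 := hHleD b hb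
      rw [le_div_iff₀ h1]
      calc Real.log (∫ x, Real.exp (b * (x k) ^ 2) ∂μ) * (1 - 2 * b / ε)
          = b * ((1 / b - 2 / ε) * Real.log (∫ x, Real.exp (b * (x k) ^ 2) ∂μ)) := by
            field_simp [ne_of_gt hb.1]
        _ ≤ b * D := mul_le_mul_of_nonneg_left h3 hb.1.le
    calc ∫ x, Real.exp (b * (x k) ^ 2) ∂μ
        = Real.exp (Real.log (∫ x, Real.exp (b * (x k) ^ 2) ∂μ)) :=
          (Real.exp_log (hpos b hb.1.le hb.2.le)).symm
      _ ≤ _ := Real.exp_le_exp.2 h2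
  -- pass to the limit b → a⁻
  have hlimh : Tendsto (fun b => ∫ x, Real.exp (b * (x k) ^ 2) ∂μ) (𝓝[<] a)
      (𝓝 (∫ x, Real.exp (a * (x k) ^ 2) ∂μ)) := by
    refine tendsto_integral_filter_of_dominated_convergence
      (fun x => Real.exp (a * (x k) ^ 2))
      (Eventually.of_forall fun b => hmeas b) ?_ hInt ?_
    · filter_upwards [self_mem_nhdsWithin] with b hb
      refine Eventually.of_forall fun x => ?_
      rw [Real.norm_eq_abs, abs_of_pos (exp_pos _)]
      exact Real.exp_le_exp.mpr
        (mul_le_mul_of_nonneg_right (le_of_lt hb) (sq_nonneg _))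
    · refine Eventually.of_forall fun x => ?_
      exact (((Real.continuous_exp.comp
        (continuous_id.mul continuous_const)).tendsto a).mono_left nhdsWithin_le_nhds)
  have h1a : (0:ℝ) < 1 - 2 * a / ε := by
    rw [sub_pos, div_lt_one hε]; linarith
  have hlimr : Tendsto (fun b => Real.exp (b * D / (1 - 2 * b / ε))) (𝓝[<] a)
      (𝓝 (Real.exp (a * D / (1 - 2 * a / ε)))) := by
    have hc : ContinuousAt (fun b : ℝ => Real.exp (b * D / (1 - 2 * b / ε))) a := by
      refine Real.continuous_exp.continuousAt.comp ?_
      refine ContinuousAt.div ?_ ?_ (ne_of_gt h1a)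
      · exact continuousAt_id.mul continuousAt_const
      · exact continuousAt_const.sub ((continuousAt_const.mul continuousAt_id).div_const ε)
    exact hc.tendsto.mono_left nhdsWithin_le_nhds
  refine le_of_tendsto_of_tendsto hlimh hlimr ?_
  filter_upwards [Ioo_mem_nhdsLT_of_mem ⟨hapos, le_refl a⟩] with b hb
  exact hmain b hb
end

section
/- Let h : [0, b) → [1, ∞) be C¹ with h(0) = 1, h'(0) ≤ D, h increasing, and suppose a(1 - 2a/ε) h'(a) ≤ h(a) ln h(a) for all a ∈ (0, b) where b ≤ ε/2. Then h(a) ≤ exp( aD / (1 - 2a/ε) ) for all a ∈ [0, b). -/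
open Set Filter Topology Real

/-! With `ψ = log h` and the weight `w t = t⁻¹ - 2/ε`, the differential inequality says exactly
`(ψ w)' = (t (1 - 2t/ε) h' - h log h) / (h t²) ≤ 0`, so `ψ w` is antitone on `(0, b)`.
Since `ψ 0 = 0`, `ψ w` tends to `ψ'(0) = h'(0) ≤ D` at `0⁺`, hence `ψ(a) w(a) ≤ D`, which
rearranges to `log h(a) ≤ aD / (1 - 2a/ε)`. -/

lemma HasDerivAt.tendsto_mul_inv_sub_nhdsGT {ψ : ℝ → ℝ} {L : ℝ} (hψ : HasDerivAt ψ L 0)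
    (hψ0 : ψ 0 = 0) (c : ℝ) : Tendsto (fun t ↦ ψ t * (t⁻¹ - c)) (𝓝[>] 0) (𝓝 L) := by
  have hslope : Tendsto (fun t ↦ t⁻¹ * ψ t) (𝓝[>] 0) (𝓝 L) := by
    simpa [hψ0] using hψ.tendsto_slope_zero_right
  have hvanish : Tendsto (fun t ↦ c * ψ t) (𝓝[>] 0) (𝓝 0) := by
    simpa [hψ0] using ((hψ.continuousAt.tendsto).const_mul c).mono_left nhdsWithin_le_nhds
  simpa [mul_sub, mul_comm] using hslope.sub hvanish

lemma AntitoneOn.le_of_tendsto_nhdsGT {f : ℝ → ℝ} {x b L : ℝ} (hf : AntitoneOn f (Ioo x b))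
    (hL : Tendsto f (𝓝[>] x) (𝓝 L)) {a : ℝ} (ha : a ∈ Ioo x b) : f a ≤ L :=
  ge_of_tendsto hL <| by
    filter_upwards [Ioo_mem_nhdsGT ha.1] with t ht
    exact hf ⟨ht.1, ht.2.trans ha.2⟩ ha ht.2.le

lemma antitoneOn_log_mul_inv_sub {h h' : ℝ → ℝ} {b c : ℝ} (hpos : ∀ t ∈ Ioo 0 b, 0 < h t)
    (hderiv : ∀ t ∈ Ioo 0 b, HasDerivAt h (h' t) t)
    (hineq : ∀ t ∈ Ioo 0 b, t * (1 - c * t) * h' t ≤ h t * log (h t)) :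
    AntitoneOn (fun t ↦ log (h t) * (t⁻¹ - c)) (Ioo 0 b) := by
  have hderiv' : ∀ t ∈ Ioo 0 b, HasDerivAt (fun t ↦ log (h t) * (t⁻¹ - c))
      ((t * (1 - c * t) * h' t - h t * log (h t)) / (h t * t ^ 2)) t := by
    intro t ht
    have hd : HasDerivAt (fun t ↦ log (h t) * (t⁻¹ - c))
        (h' t / h t * (t⁻¹ - c) + log (h t) * -(t ^ 2)⁻¹) t :=
      ((hderiv t ht).log (hpos t ht).ne').mul ((hasDerivAt_inv ht.1.ne').sub_const c)
    refine hd.congr_deriv ?_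
    have := (hpos t ht).ne'
    have := ht.1.ne'
    field_simp
    ring
  refine antitoneOn_of_hasDerivWithinAt_nonpos (convex_Ioo 0 b)
    (f' := fun t ↦ (t * (1 - c * t) * h' t - h t * log (h t)) / (h t * t ^ 2))
    (fun t ht ↦ (hderiv' t ht).continuousAt.continuousWithinAt) ?_ ?_ <;> rw [interior_Ioo]
  · exact fun t ht ↦ (hderiv' t ht).hasDerivWithinAt
  · intro t ht
    exact div_nonpos_of_nonpos_of_nonneg (sub_nonpos.mpr (hineq t ht))
      (mul_nonneg (hpos t ht).le (sq_nonneg t))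

theorem herbst_ode_comparison_general
    (ε b D : ℝ) (hbε : b ≤ ε / 2)
    (h h' : ℝ → ℝ)
    (hge : ∀ a ∈ Ico (0 : ℝ) b, 1 ≤ h a)
    (hderiv : ∀ a ∈ Ico (0 : ℝ) b, HasDerivAt h (h' a) a)
    (h0 : h 0 = 1)
    (h'0 : h' 0 ≤ D)
    (hineq : ∀ a ∈ Ioo (0 : ℝ) b,
      a * (1 - 2 * a / ε) * h' a ≤ h a * Real.log (h a)) :
    ∀ a ∈ Ico (0 : ℝ) b, h a ≤ Real.exp (a * D / (1 - 2 * a / ε)) := by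
  rintro a ⟨ha0, hab⟩
  rcases ha0.eq_or_lt with rfl | hapos
  · simp [h0]
  have hpos : ∀ t ∈ Ico 0 b, 0 < h t := fun t ht ↦ one_pos.trans_le (hge t ht)
  have hlim : Tendsto (fun t ↦ log (h t) * (t⁻¹ - 2 / ε)) (𝓝[>] 0) (𝓝 (h' 0)) := by
    simpa [h0] using ((hderiv 0 ⟨le_rfl, hapos.trans hab⟩).log (by simp [h0]))
      |>.tendsto_mul_inv_sub_nhdsGT (by simp [h0]) (2 / ε)
  have hanti := antitoneOn_log_mul_inv_sub (c := 2 / ε)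
    (fun t ht ↦ hpos t (Ioo_subset_Ico_self ht)) (fun t ht ↦ hderiv t (Ioo_subset_Ico_self ht))
    (fun t ht ↦ by convert hineq t ht using 4; ring)
  have hwa : log (h a) * (a⁻¹ - 2 / ε) ≤ D :=
    (hanti.le_of_tendsto_nhdsGT hlim ⟨hapos, hab⟩).trans h'0
  have hlog : log (h a) ≤ a * D / (1 - 2 * a / ε) := by
    have hε : 0 < ε := by linarith
    rw [le_div_iff₀ (by rw [sub_pos, div_lt_one hε]; linarith)]
    calc log (h a) * (1 - 2 * a / ε) = a * (log (h a) * (a⁻¹ - 2 / ε)) := by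
          field_simp
      _ ≤ a * D := mul_le_mul_of_nonneg_left hwa hapos.le
  calc h a = exp (log (h a)) := (exp_log (hpos a ⟨ha0, hab⟩)).symm
    _ ≤ exp (a * D / (1 - 2 * a / ε)) := exp_le_exp.mpr hlog

/-- ODE comparison lemma behind the Herbst argument: a subsolution of
`a(1 - 2a/ε) h' = h ln h` with `h(0) = 1`, `h'(0) ≤ D` satisfies
`h(a) ≤ exp(aD/(1 - 2a/ε))` on `[0, b)`, `b ≤ ε/2`. -/
theorem herbst_ode_comparison
    (ε b D : ℝ) (hε : 0 < ε) (hb : 0 < b) (hbε : b ≤ ε / 2)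
    (h h' : ℝ → ℝ)
    (hge : ∀ a ∈ Ico (0 : ℝ) b, 1 ≤ h a)
    (hderiv : ∀ a ∈ Ico (0 : ℝ) b, HasDerivAt h (h' a) a)
    (h0 : h 0 = 1)
    (h'0 : h' 0 ≤ D)
    (hmono : MonotoneOn h (Ico (0 : ℝ) b))
    (hineq : ∀ a ∈ Ioo (0 : ℝ) b,
      a * (1 - 2 * a / ε) * h' a ≤ h a * Real.log (h a)) :
    ∀ a ∈ Ico (0 : ℝ) b, h a ≤ Real.exp (a * D / (1 - 2 * a / ε)) :=
  herbst_ode_comparison_general ε b D hbε h h' hge hderiv h0 h'0 hineq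
end

section
/- Let n ≥ 0, F(x) = (1 + x²)^{2n+1} and G(x) = x^{2n+2}. Then for all x, y ∈ ℝ: |G''(x - y)| ≤ (n+1) 2^{2n+1} √(F''(x)) √(F''(y)). -/
/-!
Both sides are explicit: `G''(x - y) = (2n+2)(2n+1)(x - y)^{2n}`, while dropping the
nonnegative `x²`-term of `F''` gives `F''(x) ≥ 2(2n+1)(1 + x²)^{2n}`. The claim then reduces to
`(x - y)² ≤ 2(1 + x²)(1 + y²)`, raised to the `n`-th power.
-/

lemma deriv_deriv_pow_add_two (m : ℕ) (z : ℝ) :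
    deriv (deriv fun x : ℝ => x ^ (m + 2)) z = (m + 2) * (m + 1) * z ^ m := by
  have hderiv : deriv (fun x : ℝ => x ^ (m + 2)) = fun x : ℝ => (m + 2) * x ^ (m + 1) := by
    funext x
    simp
  rw [hderiv]
  simp [mul_assoc]

lemma hasDerivAt_one_add_sq (x : ℝ) : HasDerivAt (fun x : ℝ => 1 + x ^ 2) (2 * x) x := by
  simpa using (hasDerivAt_pow 2 x).const_add 1

lemma deriv_one_add_sq_pow (k : ℕ) :
    deriv (fun x : ℝ => (1 + x ^ 2) ^ (k + 1))
      = fun x : ℝ => (k + 1) * (1 + x ^ 2) ^ k * (2 * x) := by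
  funext x
  simp

lemma deriv_deriv_one_add_sq_pow (k : ℕ) (x : ℝ) :
    deriv (deriv fun x : ℝ => (1 + x ^ 2) ^ (k + 1)) x
      = (k + 1) * (k * (1 + x ^ 2) ^ (k - 1) * (2 * x)) * (2 * x)
        + (k + 1) * (1 + x ^ 2) ^ k * 2 := by
  have hfactor : HasDerivAt (fun x : ℝ => (k + 1) * (1 + x ^ 2) ^ k)
      ((k + 1) * (k * (1 + x ^ 2) ^ (k - 1) * (2 * x))) x :=
    ((hasDerivAt_one_add_sq x).pow k).const_mul _
  have hlin : HasDerivAt (fun x : ℝ => 2 * x) 2 x := by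
    simpa using (hasDerivAt_id x).const_mul (2 : ℝ)
  rw [deriv_one_add_sq_pow]
  exact (hfactor.mul hlin).deriv

lemma two_mul_one_add_sq_pow_le_deriv_deriv (k : ℕ) (x : ℝ) :
    2 * (k + 1) * (1 + x ^ 2) ^ k ≤ deriv (deriv fun x : ℝ => (1 + x ^ 2) ^ (k + 1)) x := by
  rw [deriv_deriv_one_add_sq_pow]
  have hsq_term : 0 ≤ (k + 1) * (k * (1 + x ^ 2) ^ (k - 1) * (2 * x)) * (2 * x) := by
    have : 0 ≤ (k + 1) * (k * (1 + x ^ 2) ^ (k - 1)) * (2 * x) ^ 2 := by positivity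
    linarith
  linarith

lemma sq_sub_le_two_mul_one_add_sq_mul (x y : ℝ) :
    (x - y) ^ 2 ≤ 2 * ((1 + x ^ 2) * (1 + y ^ 2)) := by
  nlinarith [sq_nonneg (x + y), sq_nonneg (x * y)]

lemma mul_mul_le_sqrt_mul_sqrt {a p q u v : ℝ} (ha : 0 ≤ a) (hp : 0 ≤ p) (hq : 0 ≤ q)
    (hu : a * p ^ 2 ≤ u) (hv : a * q ^ 2 ≤ v) : a * (p * q) ≤ √u * √v := by
  have hu0 : 0 ≤ u := (by positivity : 0 ≤ a * p ^ 2).trans hu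
  have hv0 : 0 ≤ v := (by positivity : 0 ≤ a * q ^ 2).trans hv
  rw [← Real.sqrt_mul hu0, Real.le_sqrt (by positivity) (mul_nonneg hu0 hv0)]
  calc (a * (p * q)) ^ 2 = (a * p ^ 2) * (a * q ^ 2) := by ring
    _ ≤ u * v := mul_le_mul hu hv (by positivity) hu0

/-- Growth condition C for Model 1: for `F(x) = (1 + x²)^{2n+1}` and
`G(x) = x^{2n+2}` one has
`|G''(x - y)| ≤ (n+1)·2^{2n+1}·√(F''(x))·√(F''(y))` for all `x, y`. -/
theorem model_one_growth_condition
    (n : ℕ) (F G : ℝ → ℝ)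
    (hF : F = fun x => (1 + x ^ 2) ^ (2 * n + 1))
    (hG : G = fun x => x ^ (2 * n + 2)) :
    ∀ x y : ℝ,
      |deriv (deriv G) (x - y)|
        ≤ (n + 1) * 2 ^ (2 * n + 1) *
          Real.sqrt (deriv (deriv F) x) * Real.sqrt (deriv (deriv F) y) := by
  intro x y
  subst hF hG
  set P := (1 + x ^ 2) ^ n
  set Q := (1 + y ^ 2) ^ n
  have hF'' : ∀ t : ℝ, 2 * (2 * n + 1) * ((1 + t ^ 2) ^ n) ^ 2
      ≤ deriv (deriv fun x : ℝ => (1 + x ^ 2) ^ (2 * n + 1)) t := fun t => by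
    simpa [← pow_mul, mul_comm n 2] using two_mul_one_add_sq_pow_le_deriv_deriv (2 * n) t
  have hsqrt := mul_mul_le_sqrt_mul_sqrt (by positivity) (by positivity) (by positivity)
    (hF'' x) (hF'' y)
  have hdiff : ((x - y) ^ 2) ^ n ≤ 2 ^ n * (P * Q) := by
    rw [← mul_pow, ← mul_pow]
    exact pow_le_pow_left₀ (sq_nonneg _) (sq_sub_le_two_mul_one_add_sq_mul x y) n
  have htwo : (2 : ℝ) ^ n ≤ 2 ^ (2 * n + 1) := pow_le_pow_right₀ (by norm_num) (by omega)
  rw [deriv_deriv_pow_add_two, pow_mul, abs_of_nonneg (by positivity)]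
  push_cast
  calc (2 * n + 2) * (2 * n + 1) * ((x - y) ^ 2) ^ n
      ≤ (2 * n + 2) * (2 * n + 1) * (2 ^ (2 * n + 1) * (P * Q)) := by
        gcongr
        exact hdiff.trans (mul_le_mul_of_nonneg_right htwo (by positivity))
    _ = (n + 1) * 2 ^ (2 * n + 1) * (2 * (2 * n + 1) * (P * Q)) := by ring
    _ ≤ _ := by rw [mul_assoc _ √_]; exact mul_le_mul_of_nonneg_left hsqrt (by positivity)
end

section
/- Let F : ℝ → ℝ be C² with F'' ≥ ε > 0, G : ℝ → ℝ C² convex, and for fixed parameter y ∈ ℝ let μ_y be the probability measure with density proportional to exp(-F(x) - G(x - y)) dx. Define δ(f) = sup_x |f'(x)|/√(F''(x)) and C = sup_{x,y} |G''(x-y)|/(√(F''(x))√(F''(y))). Then for every C¹ function f(x) (independent of y) with δ(f) < ∞, the function y ↦ ∫ f dμ_y is differentiable and sup_y |d/dy ∫ f dμ_y| / √(F''(y)) ≤ C · δ(f). -/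
/-!
Differentiating under the integral sign and applying the quotient rule gives
`d/dy ∫ f dμ_y = Cov_{μ_y}(f, G'(· - y))`, which Cauchy–Schwarz bounds by
`√(Var f · Var G'(· - y))`. Both variances are controlled by a one-dimensional
Brascamp–Lieb type inequality for `μ_y ∝ exp (-V)`, `V = F + G(· - y)`, `V'' ≥ F'' ≥ ε`:
if `φ'² ≤ K V''` and `a` is the mode of `V`, then Cauchy–Schwarz on `[a, x]` gives
`(φ x - φ a)² ≤ (∫ₐˣ φ'²/V'') V'(x)`, and an integration by parts against `exp (-V)` bounds
the right-hand side by `K ∫ exp (-V)`. The hypotheses on `f` and `G''` give `K = δ²` for `f`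
and `K = C² F''(y)` for `G'(· - y)`. The same square-integrability, together with the
monotonicity of `G'`, dominates the `y`-derivative of the integrand.
-/

open MeasureTheory ProbabilityTheory Real Set Filter

theorem sq_integral_mul_le {α : Type*} [MeasurableSpace α] {μ : Measure α} {u v : α → ℝ}
    (hu : Integrable (fun a => u a ^ 2) μ) (hv : Integrable (fun a => v a ^ 2) μ)
    (huv : Integrable (fun a => u a * v a) μ) :
    (∫ a, u a * v a ∂μ) ^ 2 ≤ (∫ a, u a ^ 2 ∂μ) * ∫ a, v a ^ 2 ∂μ := by
  have hquad : ∀ s : ℝ, 0 ≤ (∫ a, u a ^ 2 ∂μ) * (s * s) + (-2 * ∫ a, u a * v a ∂μ) * s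
      + ∫ a, v a ^ 2 ∂μ := by
    intro s
    have hexpand : ∫ a, (s * u a - v a) ^ 2 ∂μ
        = ∫ a, s ^ 2 * u a ^ 2 - 2 * s * (u a * v a) + v a ^ 2 ∂μ :=
      integral_congr_ae (ae_of_all _ fun a => by ring)
    rw [integral_add (f := fun a => s ^ 2 * u a ^ 2 - 2 * s * (u a * v a))
      ((hu.const_mul _).sub (huv.const_mul _)) hv,
      integral_sub (hu.const_mul _) (huv.const_mul _), integral_const_mul,
      integral_const_mul] at hexpand
    have hnonneg : 0 ≤ ∫ a, (s * u a - v a) ^ 2 ∂μ := integral_nonneg fun a => sq_nonneg _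
    nlinarith
  have hdiscr := discrim_le_zero hquad
  rw [discrim] at hdiscr
  nlinarith

theorem sq_covariance_le_variance_mul {Ω : Type*} [MeasurableSpace Ω] {μ : Measure Ω}
    [IsFiniteMeasure μ] {X Y : Ω → ℝ} (hX : MemLp X 2 μ) (hY : MemLp Y 2 μ) :
    cov[X, Y; μ] ^ 2 ≤ Var[X; μ] * Var[Y; μ] := by
  have hX' : MemLp (fun ω => X ω - μ[X]) 2 μ := hX.sub (memLp_const _)
  have hY' : MemLp (fun ω => Y ω - μ[Y]) 2 μ := hY.sub (memLp_const _)
  rw [covariance, variance_eq_integral hX.aemeasurable, variance_eq_integral hY.aemeasurable]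
  exact sq_integral_mul_le hX'.integrable_sq hY'.integrable_sq (hX'.integrable_mul hY')

theorem variance_le_integral_sq_sub {Ω : Type*} [MeasurableSpace Ω] {μ : Measure Ω}
    [IsProbabilityMeasure μ] {X : Ω → ℝ} (hX : AEStronglyMeasurable X μ) (c : ℝ) :
    Var[X; μ] ≤ ∫ ω, (X ω - c) ^ 2 ∂μ := by
  rw [← variance_sub_const hX c]
  exact variance_le_expectation_sq (hX.sub aestronglyMeasurable_const)

section Density

variable {α : Type*} [MeasurableSpace α] {m ν : Measure α} {ρ : α → ℝ} {Z : ℝ}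

theorem pos_of_isProbabilityMeasure_withDensity_div
    (hν : ν = m.withDensity fun x => ENNReal.ofReal (ρ x / Z)) [IsProbabilityMeasure ν]
    (hρ : ∀ x, 0 ≤ ρ x) : 0 < Z := by
  by_contra! hZ
  have hzero : (fun x => ENNReal.ofReal (ρ x / Z)) = 0 :=
    funext fun x => ENNReal.ofReal_eq_zero.2 (div_nonpos_of_nonneg_of_nonpos (hρ x) hZ)
  have := measure_univ (μ := ν)
  simp [hν, hzero] at this

theorem integrable_withDensity_div_iff
    (hν : ν = m.withDensity fun x => ENNReal.ofReal (ρ x / Z))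
    (hρm : Measurable ρ) (hρ : ∀ x, 0 ≤ ρ x) (hZ : 0 < Z) {g : α → ℝ} :
    Integrable g ν ↔ Integrable (fun x => g x * ρ x) m := by
  rw [hν, integrable_withDensity_iff (hρm.div_const Z).ennreal_ofReal
    (ae_of_all _ fun _ => ENNReal.ofReal_lt_top)]
  simp_rw [ENNReal.toReal_ofReal (div_nonneg (hρ _) hZ.le), div_eq_mul_inv, ← mul_assoc]
  exact integrable_mul_const_iff (inv_ne_zero hZ.ne').isUnit _

theorem integral_withDensity_div
    (hν : ν = m.withDensity fun x => ENNReal.ofReal (ρ x / Z))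
    (hρm : Measurable ρ) (hρ : ∀ x, 0 ≤ ρ x) (hZ : 0 < Z) (g : α → ℝ) :
    ∫ x, g x ∂ν = (∫ x, g x * ρ x ∂m) / Z := by
  rw [hν, integral_withDensity_eq_integral_toReal_smul (hρm.div_const Z).ennreal_ofReal
    (ae_of_all _ fun _ => ENNReal.ofReal_lt_top), ← integral_div]
  congr 1 with x
  rw [ENNReal.toReal_ofReal (div_nonneg (hρ _) hZ.le), smul_eq_mul]
  ring

theorem integrable_and_integral_eq_of_isProbabilityMeasure_withDensity_div
    (hν : ν = m.withDensity fun x => ENNReal.ofReal (ρ x / Z)) [IsProbabilityMeasure ν]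
    (hρm : Measurable ρ) (hρ : ∀ x, 0 ≤ ρ x) :
    Integrable ρ m ∧ ∫ x, ρ x ∂m = Z := by
  have hZ := pos_of_isProbabilityMeasure_withDensity_div hν hρ
  have hint := (integrable_withDensity_div_iff hν hρm hρ hZ).1 (integrable_const (1 : ℝ))
  have hone := integral_withDensity_div hν hρm hρ hZ fun _ => 1
  simp only [one_mul, integral_const, probReal_univ, smul_eq_mul, mul_one] at hint hone
  rw [eq_div_iff hZ.ne', one_mul] at hone
  exact ⟨hint, hone.symm⟩

end Density

theorem sq_intervalIntegral_mul_le {u v : ℝ → ℝ} (hu : Continuous u) (hv : Continuous v)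
    (a b : ℝ) :
    (∫ t in a..b, u t * v t) ^ 2 ≤ (∫ t in a..b, u t ^ 2) * ∫ t in a..b, v t ^ 2 := by
  wlog hab : a ≤ b generalizing a b
  · have h := this b a (le_of_not_ge hab)
    rw [intervalIntegral.integral_symm a b, intervalIntegral.integral_symm a b,
      intervalIntegral.integral_symm a b, neg_sq, neg_mul_neg] at h
    exact h
  simp only [intervalIntegral.integral_of_le hab]
  exact sq_integral_mul_le (hu.pow 2).integrableOn_Ioc (hv.pow 2).integrableOn_Ioc
    (hu.mul hv).integrableOn_Ioc

theorem sq_sub_le_integral_mul_deriv_sub {φ V : ℝ → ℝ} (hφ : ContDiff ℝ 1 φ)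
    (hV : ContDiff ℝ 2 V) (hV'' : ∀ x, 0 < deriv (deriv V) x) (a x : ℝ) :
    (φ x - φ a) ^ 2
      ≤ (∫ t in a..x, deriv φ t ^ 2 / deriv (deriv V) t) * (deriv V x - deriv V a) := by
  have hV1 : ContDiff ℝ 1 (deriv V) := hV.deriv'
  have hφ' : Continuous (deriv φ) := hφ.continuous_deriv le_rfl
  have hV''c : Continuous (deriv (deriv V)) := hV1.continuous_deriv le_rfl
  have hsqrt : ∀ t, √(deriv (deriv V) t) ≠ 0 := fun t => (sqrt_pos.2 (hV'' t)).ne'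
  have h := sq_intervalIntegral_mul_le (u := fun t => deriv φ t / √(deriv (deriv V) t))
    (hφ'.div hV''c.sqrt hsqrt) hV''c.sqrt a x
  simp only [div_mul_cancel₀ _ (hsqrt _), div_pow, sq_sqrt (hV'' _).le] at h
  rwa [intervalIntegral.integral_deriv_eq_sub (fun t _ => hφ.differentiable one_ne_zero t)
      (hφ'.intervalIntegrable a x),
    intervalIntegral.integral_deriv_eq_sub (fun t _ => hV1.differentiable one_ne_zero t)
      (hV''c.intervalIntegrable a x)] at h

theorem exists_deriv_eq_zero_of_le_deriv_deriv {V : ℝ → ℝ} {ε : ℝ} (hε : 0 < ε)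
    (hV : ContDiff ℝ 2 V) (hV'' : ∀ x, ε ≤ deriv (deriv V) x) : ∃ a, deriv V a = 0 := by
  have hV1 : ContDiff ℝ 1 (deriv V) := hV.deriv'
  have hmono : Monotone fun x => deriv V x - ε * x := by
    refine monotone_of_deriv_nonneg ((hV1.differentiable one_ne_zero).sub (by fun_prop)) fun x => ?_
    have h : HasDerivAt (fun x => deriv V x - ε * x) (deriv (deriv V) x - ε * 1) x :=
      (hV1.differentiable one_ne_zero x).hasDerivAt.sub ((hasDerivAt_id x).const_mul ε)
    rw [h.deriv]
    linarith [hV'' x]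
  set T := |deriv V 0| / ε
  have hT : ε * T = |deriv V 0| := mul_div_cancel₀ _ hε.ne'
  have hT0 : 0 ≤ T := by positivity
  have hright : 0 ≤ deriv V T := by
    have := hmono hT0
    simp only [mul_zero, sub_zero] at this
    linarith [neg_abs_le (deriv V 0)]
  have hleft : deriv V (-T) ≤ 0 := by
    have := hmono (neg_nonpos.2 hT0)
    simp only [mul_zero, sub_zero, mul_neg, sub_neg_eq_add] at this
    linarith [le_abs_self (deriv V 0)]
  obtain ⟨a, -, ha⟩ := intermediate_value_Icc (by linarith) hV1.continuous.continuousOn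
    ⟨hleft, hright⟩
  exact ⟨a, ha⟩

theorem intervalIntegral_integral_mul_deriv_mul_exp_neg_le {V r : ℝ → ℝ} {a b c : ℝ}
    (hV : ContDiff ℝ 1 V) (hr : Continuous r) (hr0 : ∀ t, 0 ≤ r t) (hca : c ≤ a)
    (hab : a ≤ b) :
    ∫ x in c..b, (∫ t in a..x, r t) * deriv V x * exp (-V x)
      ≤ ∫ x in c..b, r x * exp (-V x) := by
  set w : ℝ → ℝ := fun x => ∫ t in a..x, r t
  have hp : Continuous fun x => exp (-V x) := by fun_prop
  have hrp : Continuous fun x => r x * exp (-V x) := hr.mul hp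
  have hq : Continuous fun x => w x * deriv V x * exp (-V x) :=
    (continuous_iff_continuousAt.2 fun x =>
      (hr.integral_hasStrictDerivAt a x).hasDerivAt.continuousAt).mul
      (hV.continuous_deriv le_rfl) |>.mul hp
  have hFTC : ∫ x in c..b, (r x * exp (-V x) - w x * deriv V x * exp (-V x))
      = w b * exp (-V b) - w c * exp (-V c) := by
    refine intervalIntegral.integral_eq_sub_of_hasDerivAt (f := fun x => w x * exp (-V x))
      (fun x _ => ?_) ((hrp.sub hq).intervalIntegrable _ _)
    have hd : HasDerivAt (fun x => w x * exp (-V x))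
        (r x * exp (-V x) + w x * (exp (-V x) * -deriv V x)) x :=
      (hr.integral_hasStrictDerivAt a x).hasDerivAt.mul
        ((hV.differentiable one_ne_zero x).hasDerivAt.neg.exp)
    exact hd.congr_deriv (by ring)
  have hwb : 0 ≤ w b := intervalIntegral.integral_nonneg hab fun t _ => hr0 t
  have hwc : w c ≤ 0 := by
    rw [show w c = -∫ t in c..a, r t from intervalIntegral.integral_symm _ _, neg_nonpos]
    exact intervalIntegral.integral_nonneg hca fun t _ => hr0 t
  rw [intervalIntegral.integral_sub (hrp.intervalIntegrable _ _)
    (hq.intervalIntegrable _ _)] at hFTC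
  nlinarith [mul_nonneg hwb (exp_pos (-V b)).le,
    mul_nonpos_of_nonpos_of_nonneg hwc (exp_pos (-V c)).le]

theorem integrable_and_integral_le_of_intervalIntegral_le {q : ℝ → ℝ} {a I : ℝ}
    (hq : Continuous q) (hq0 : ∀ x, 0 ≤ q x) (hI : ∀ n : ℕ, ∫ x in a - n..a + n, q x ≤ I) :
    Integrable q ∧ ∫ x, q x ≤ I := by
  have hlo : Tendsto (fun n : ℕ => a - n) atTop atBot :=
    tendsto_atBot_add_const_left _ _ (tendsto_neg_atTop_atBot.comp tendsto_natCast_atTop_atTop)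
  have hhi : Tendsto (fun n : ℕ => a + n) atTop atTop :=
    tendsto_atTop_add_const_left _ _ tendsto_natCast_atTop_atTop
  have hqint : Integrable q :=
    integrable_of_intervalIntegral_norm_bounded I (fun n => hq.integrableOn_Ioc) hlo hhi
      (Eventually.of_forall fun n => by
        simpa only [Real.norm_eq_abs, abs_of_nonneg (hq0 _)] using hI n)
  exact ⟨hqint, le_of_tendsto (intervalIntegral_tendsto_integral hqint hlo hhi)
    (Eventually.of_forall hI)⟩

theorem integral_sq_sub_mul_exp_neg_le {V φ : ℝ → ℝ} {a K : ℝ} (hV : ContDiff ℝ 2 V)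
    (hV'' : ∀ x, 0 < deriv (deriv V) x) (ha : deriv V a = 0)
    (hexp : Integrable fun x => exp (-V x)) (hφ : ContDiff ℝ 1 φ)
    (hφK : ∀ x, deriv φ x ^ 2 ≤ K * deriv (deriv V) x) :
    Integrable (fun x => (φ x - φ a) ^ 2 * exp (-V x)) ∧
      ∫ x, (φ x - φ a) ^ 2 * exp (-V x) ≤ K * ∫ x, exp (-V x) := by
  set r : ℝ → ℝ := fun t => deriv φ t ^ 2 / deriv (deriv V) t
  set q : ℝ → ℝ := fun x => (∫ t in a..x, r t) * deriv V x * exp (-V x)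
  have hr : Continuous r :=
    ((hφ.continuous_deriv le_rfl).pow 2).div (hV.deriv'.continuous_deriv le_rfl)
      fun t => (hV'' t).ne'
  have hr0 : ∀ t, 0 ≤ r t := fun t => div_nonneg (sq_nonneg _) (hV'' t).le
  have hrK : ∀ t, r t ≤ K := fun t => (div_le_iff₀ (hV'' t)).2 (hφK t)
  have hK : 0 ≤ K := (hr0 0).trans (hrK 0)
  have hp : Continuous fun x => exp (-V x) := by fun_prop
  have hq : Continuous q :=
    (continuous_iff_continuousAt.2 fun x =>
      (hr.integral_hasStrictDerivAt a x).hasDerivAt.continuousAt).mul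
      (hV.continuous_deriv (by norm_num)) |>.mul hp
  have hsq_le_q : ∀ x, (φ x - φ a) ^ 2 * exp (-V x) ≤ q x := fun x => by
    have := sq_sub_le_integral_mul_deriv_sub hφ hV hV'' a x
    rw [ha, sub_zero] at this
    exact mul_le_mul_of_nonneg_right this (exp_pos _).le
  have hq0 : ∀ x, 0 ≤ q x := fun x =>
    (mul_nonneg (sq_nonneg _) (exp_pos _).le).trans (hsq_le_q x)
  have hq_window : ∀ n : ℕ, ∫ x in a - n..a + n, q x ≤ K * ∫ x, exp (-V x) := by
    intro n
    have hc : a - n ≤ a := by linarith [n.cast_nonneg (α := ℝ)]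
    have hb : a ≤ a + n := by linarith [n.cast_nonneg (α := ℝ)]
    calc ∫ x in a - n..a + n, q x ≤ ∫ x in a - n..a + n, r x * exp (-V x) :=
          intervalIntegral_integral_mul_deriv_mul_exp_neg_le hV.of_succ hr hr0 hc hb
      _ ≤ ∫ x in a - n..a + n, K * exp (-V x) :=
          intervalIntegral.integral_mono_on (hc.trans hb) ((hr.mul hp).intervalIntegrable _ _)
            ((continuous_const.mul hp).intervalIntegrable _ _)
            fun x _ => mul_le_mul_of_nonneg_right (hrK x) (exp_pos _).le
      _ ≤ K * ∫ x, exp (-V x) := by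
          rw [intervalIntegral.integral_const_mul, intervalIntegral.integral_of_le (hc.trans hb)]
          exact mul_le_mul_of_nonneg_left
            (setIntegral_le_integral hexp (ae_of_all _ fun x => (exp_pos _).le)) hK
  obtain ⟨hqint, hqI⟩ := integrable_and_integral_le_of_intervalIntegral_le hq hq0 hq_window
  have hφc := hφ.continuous
  have hint_le : ∀ x, ‖(φ x - φ a) ^ 2 * exp (-V x)‖ ≤ q x := fun x => by
    rw [Real.norm_eq_abs, abs_of_nonneg (mul_nonneg (sq_nonneg _) (exp_pos _).le)]
    exact hsq_le_q x
  exact ⟨hqint.mono' (by fun_prop) (ae_of_all _ hint_le),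
    (integral_mono_of_nonneg (ae_of_all _ fun x => mul_nonneg (sq_nonneg _) (exp_pos _).le)
      hqint (ae_of_all _ hsq_le_q)).trans hqI⟩

theorem memLp_two_and_variance_le_of_sq_deriv_le {V φ : ℝ → ℝ} {ε K Z : ℝ} {ν : Measure ℝ}
    (hε : 0 < ε) (hV : ContDiff ℝ 2 V) (hV'' : ∀ x, ε ≤ deriv (deriv V) x)
    (hν : ν = volume.withDensity fun x => ENNReal.ofReal (exp (-V x) / Z))
    [IsProbabilityMeasure ν] (hφ : ContDiff ℝ 1 φ)
    (hφK : ∀ x, deriv φ x ^ 2 ≤ K * deriv (deriv V) x) :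
    MemLp φ 2 ν ∧ Var[φ; ν] ≤ K := by
  have hpm : Measurable fun x => exp (-V x) := by have := hV.continuous; fun_prop
  have hp0 : ∀ x, 0 ≤ exp (-V x) := fun x => (exp_pos _).le
  have hZ := pos_of_isProbabilityMeasure_withDensity_div hν hp0
  obtain ⟨hexp, hZeq⟩ :=
    integrable_and_integral_eq_of_isProbabilityMeasure_withDensity_div hν hpm hp0
  obtain ⟨a, ha⟩ := exists_deriv_eq_zero_of_le_deriv_deriv hε hV hV''
  obtain ⟨hint, hle⟩ := integral_sq_sub_mul_exp_neg_le hV (fun x => hε.trans_le (hV'' x)) ha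
    hexp hφ hφK
  have hφm : AEStronglyMeasurable φ ν := hφ.continuous.aestronglyMeasurable
  have hsq : ∫ x, (φ x - φ a) ^ 2 ∂ν ≤ K := by
    rwa [integral_withDensity_div hν hpm hp0 hZ, div_le_iff₀ hZ, ← hZeq]
  have hL2 : MemLp (fun x => φ x - φ a) 2 ν :=
    (memLp_two_iff_integrable_sq (hφm.sub aestronglyMeasurable_const)).2
      ((integrable_withDensity_div_iff hν hpm hp0 hZ).2 hint)
  refine ⟨?_, (variance_le_integral_sq_sub hφm (φ a)).trans hsq⟩
  convert hL2.add (memLp_const (φ a)) using 1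
  ext x
  simp

theorem le_or_le_or_deriv_neg_and_pos {G : ℝ → ℝ} (hG : Differentiable ℝ G)
    (hG' : Monotone (deriv G)) {a t b : ℝ} (hat : a ≤ t) (htb : t ≤ b) :
    G a ≤ G t ∨ G b ≤ G t ∨ (deriv G a < 0 ∧ 0 < deriv G b) := by
  by_cases ha : 0 ≤ deriv G a
  · refine Or.inl (monotoneOn_of_deriv_nonneg (convex_Icc a t) hG.continuous.continuousOn
      (hG.differentiableOn.mono interior_subset) (fun x hx => ha.trans (hG' (interior_subset hx).1))
      ⟨le_rfl, hat⟩ ⟨hat, le_rfl⟩ hat)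
  by_cases hb : deriv G b ≤ 0
  · refine Or.inr (Or.inl (antitoneOn_of_deriv_nonpos (convex_Icc t b) hG.continuous.continuousOn
      (hG.differentiableOn.mono interior_subset) (fun x hx => (hG' (interior_subset hx).2).trans hb)
      ⟨le_rfl, htb⟩ ⟨htb, le_rfl⟩ htb))
  exact Or.inr (Or.inr ⟨not_le.1 ha, not_le.1 hb⟩)

theorem exists_exp_neg_comp_sub_le {G : ℝ → ℝ} (hG : ContDiff ℝ 1 G) (hG' : Monotone (deriv G))
    (y₀ : ℝ) : ∃ K : Set ℝ, IsCompact K ∧ ∃ c, ∀ x, ∀ y ∈ Metric.ball y₀ 1,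
      exp (-G (x - y))
        ≤ exp (-G (x - (y₀ + 1))) + exp (-G (x - (y₀ - 1))) + K.indicator (fun _ => c) x := by
  have hGd := hG.differentiable one_ne_zero
  have key : ∀ x, ∀ y ∈ Metric.ball y₀ 1,
      exp (-G (x - y)) ≤ exp (-G (x - (y₀ + 1))) + exp (-G (x - (y₀ - 1))) ∨
        (deriv G (x - (y₀ + 1)) < 0 ∧ 0 < deriv G (x - (y₀ - 1))) := by
    intro x y hy
    rw [Metric.mem_ball, Real.dist_eq, abs_lt] at hy
    rcases le_or_le_or_deriv_neg_and_pos hGd hG' (a := x - (y₀ + 1)) (t := x - y)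
      (b := x - (y₀ - 1)) (by linarith) (by linarith) with h | h | h
    · exact Or.inl (le_add_of_le_of_nonneg (exp_le_exp.2 (neg_le_neg h)) (exp_pos _).le)
    · exact Or.inl (le_add_of_nonneg_of_le (exp_pos _).le (exp_le_exp.2 (neg_le_neg h)))
    · exact Or.inr h
  by_cases hW : ∃ x₁, deriv G (x₁ - (y₀ + 1)) < 0 ∧ 0 < deriv G (x₁ - (y₀ - 1))
  · obtain ⟨x₁, hx₁⟩ := hW
    have hexpG : Continuous fun t => exp (-G t) := by fun_prop
    obtain ⟨t₀, -, ht₀⟩ := (isCompact_Icc (a := x₁ - y₀ - 3) (b := x₁ - y₀ + 3)).exists_isMaxOn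
      (nonempty_Icc.2 (by linarith)) hexpG.continuousOn
    refine ⟨Icc (x₁ - 2) (x₁ + 2), isCompact_Icc, exp (-G t₀), fun x y hy => ?_⟩
    rcases key x y hy with h | ⟨h₁, h₂⟩
    · exact h.trans (le_add_of_nonneg_right (indicator_nonneg (fun _ _ => (exp_pos _).le) _))
    · -- `G'` changes sign on `[x - y₀ - 1, x - y₀ + 1]` as on `[x₁ - y₀ - 1, x₁ - y₀ + 1]`,
      -- so monotonicity of `G'` forces `|x - x₁| < 2`.
      have hl := hG'.reflect_lt (hx₁.1.trans h₂)
      have hr := hG'.reflect_lt (h₁.trans hx₁.2)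
      rw [Metric.mem_ball, Real.dist_eq, abs_lt] at hy
      rw [indicator_of_mem (show x ∈ Icc (x₁ - 2) (x₁ + 2) from ⟨by linarith, by linarith⟩)]
      exact le_add_of_nonneg_of_le (by positivity) (ht₀ ⟨by linarith, by linarith⟩)
  · refine ⟨∅, isCompact_empty, 0, fun x y hy => ?_⟩
    rcases key x y hy with h | h
    · simpa using h
    · exact absurd ⟨x, h⟩ hW

theorem hasDerivAt_integral_mul_exp_neg_sub {F G φ : ℝ → ℝ} {y₀ : ℝ} (hF : Continuous F)
    (hG : ContDiff ℝ 1 G) (hG' : Monotone (deriv G)) (hφ : Continuous φ)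
    (hint₀ : Integrable fun x => φ x * exp (-F x - G (x - y₀)))
    (hint : ∀ y ∈ ({y₀ + 1, y₀ - 1} : Set ℝ), ∀ z ∈ ({y₀ + 1, y₀ - 1} : Set ℝ),
      Integrable fun x => φ x * deriv G (x - z) * exp (-F x - G (x - y))) :
    HasDerivAt (fun y => ∫ x, φ x * exp (-F x - G (x - y)))
      (∫ x, φ x * deriv G (x - y₀) * exp (-F x - G (x - y₀))) y₀ := by
  obtain ⟨K, hK, c, hc⟩ := exists_exp_neg_comp_sub_le hG hG' y₀
  set β : ℝ → ℝ := fun x => |deriv G (x - (y₀ + 1))| + |deriv G (x - (y₀ - 1))|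
  have hβ : ∀ x, ∀ y ∈ Metric.ball y₀ 1, |deriv G (x - y)| ≤ β x := by
    intro x y hy
    rw [Metric.mem_ball, Real.dist_eq, abs_lt] at hy
    exact (abs_le_max_abs_abs (hG' (by linarith)) (hG' (by linarith))).trans
      (max_le_add_of_nonneg (abs_nonneg _) (abs_nonneg _))
  have hsplit : ∀ y x, exp (-F x - G (x - y)) = exp (-F x) * exp (-G (x - y)) := fun y x => by
    rw [sub_eq_add_neg, exp_add]
  set bound : ℝ → ℝ := fun x => |φ x| * β x * exp (-F x) *
    (exp (-G (x - (y₀ + 1))) + exp (-G (x - (y₀ - 1))) + K.indicator (fun _ => c) x)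
  have hbound : ∀ x, ∀ y ∈ Metric.ball y₀ 1,
      ‖φ x * deriv G (x - y) * exp (-F x - G (x - y))‖ ≤ bound x := by
    intro x y hy
    rw [Real.norm_eq_abs, abs_mul, abs_mul, abs_of_pos (exp_pos _), hsplit, ← mul_assoc]
    have hβ0 : 0 ≤ β x := by positivity
    simp only [bound]
    gcongr
    exacts [hβ x y hy, hc x y hy]
  have hbound_eq : bound = fun x =>
      (‖φ x * deriv G (x - (y₀ + 1)) * exp (-F x - G (x - (y₀ + 1)))‖
        + ‖φ x * deriv G (x - (y₀ - 1)) * exp (-F x - G (x - (y₀ + 1)))‖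
        + ‖φ x * deriv G (x - (y₀ + 1)) * exp (-F x - G (x - (y₀ - 1)))‖
        + ‖φ x * deriv G (x - (y₀ - 1)) * exp (-F x - G (x - (y₀ - 1)))‖)
      + K.indicator (fun x => |φ x| * β x * exp (-F x) * c) x := by
    ext x
    simp only [bound, β, Real.norm_eq_abs, abs_mul, abs_of_pos (exp_pos _), hsplit,
      indicator_mul_right K (fun x => |φ x| * β x * exp (-F x)) fun _ => c]
    ring
  have hbound_int : Integrable bound := by
    rw [hbound_eq]
    refine (((((hint _ (by simp) _ (by simp)).norm.add (hint _ (by simp) _ (by simp)).norm).add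
      (hint _ (by simp) _ (by simp)).norm).add (hint _ (by simp) _ (by simp)).norm)).add ?_
    refine (ContinuousOn.integrableOn_compact hK ?_).integrable_indicator hK.measurableSet
    fun_prop
  refine (hasDerivAt_integral_of_dominated_loc_of_deriv_le (Metric.ball_mem_nhds y₀ one_pos)
    (Eventually.of_forall fun y => by fun_prop) hint₀ (by fun_prop) (ae_of_all _ hbound)
    hbound_int (ae_of_all _ fun x y _ => ?_)).2
  have hGy : HasDerivAt (fun y => G (x - y)) (-deriv G (x - y)) y :=
    (hG.differentiable one_ne_zero (x - y)).hasDerivAt.comp_const_sub x y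
  exact ((hGy.const_sub (-F x)).exp.const_mul (φ x)).congr_deriv (by ring)

section ConditionalMeasure

variable {F G : ℝ → ℝ} {ε : ℝ}

theorem memLp_two_and_variance_le_of_abs_deriv_le {φ : ℝ → ℝ} {y Z κ : ℝ} {ν : Measure ℝ}
    (hε : 0 < ε) (hF : ContDiff ℝ 2 F) (hG : ContDiff ℝ 2 G)
    (hF'' : ∀ x, ε ≤ deriv (deriv F) x) (hGconv : ∀ x, 0 ≤ deriv (deriv G) x)
    (hν : ν = volume.withDensity fun x => ENNReal.ofReal (exp (-F x - G (x - y)) / Z))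
    [IsProbabilityMeasure ν] (hφ : ContDiff ℝ 1 φ)
    (hφκ : ∀ x, |deriv φ x| ≤ κ * √(deriv (deriv F) x)) :
    MemLp φ 2 ν ∧ Var[φ; ν] ≤ κ ^ 2 := by
  set V : ℝ → ℝ := fun x => F x + G (x - y)
  have hV' : deriv V = fun x => deriv F x + deriv G (x - y) := funext fun x =>
    ((hF.differentiable two_ne_zero x).hasDerivAt.add
      ((hG.differentiable two_ne_zero (x - y)).hasDerivAt.comp_sub_const x y)).deriv
  have hV'' : ∀ x, deriv (deriv V) x = deriv (deriv F) x + deriv (deriv G) (x - y) := fun x => by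
    rw [hV']
    exact ((hF.deriv'.differentiable one_ne_zero x).hasDerivAt.add
      ((hG.deriv'.differentiable one_ne_zero (x - y)).hasDerivAt.comp_sub_const x y)).deriv
  have hV : ContDiff ℝ 2 V := hF.add (hG.comp (contDiff_id.sub contDiff_const))
  refine memLp_two_and_variance_le_of_sq_deriv_le (Z := Z) hε hV
    (fun x => by linarith [hV'' x, hF'' x, hGconv (x - y)]) (by simp only [hν, V, neg_add'])
    hφ fun x => ?_
  have hF''x : 0 ≤ deriv (deriv F) x := (hε.trans_le (hF'' x)).le
  calc deriv φ x ^ 2 = |deriv φ x| ^ 2 := (sq_abs _).symm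
    _ ≤ (κ * √(deriv (deriv F) x)) ^ 2 := pow_le_pow_left₀ (abs_nonneg _) (hφκ x) 2
    _ = κ ^ 2 * deriv (deriv F) x := by rw [mul_pow, sq_sqrt hF''x]
    _ ≤ κ ^ 2 * deriv (deriv V) x := by
      rw [hV'' x]
      exact mul_le_mul_of_nonneg_left (le_add_of_nonneg_right (hGconv _)) (sq_nonneg κ)

theorem memLp_two_and_variance_le_deriv_comp_sub {y Z Cst : ℝ} {ν : Measure ℝ}
    (hε : 0 < ε) (hF : ContDiff ℝ 2 F) (hG : ContDiff ℝ 2 G)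
    (hF'' : ∀ x, ε ≤ deriv (deriv F) x) (hGconv : ∀ x, 0 ≤ deriv (deriv G) x)
    (hν : ν = volume.withDensity fun x => ENNReal.ofReal (exp (-F x - G (x - y)) / Z))
    [IsProbabilityMeasure ν]
    (hC : ∀ x y, |deriv (deriv G) (x - y)|
      ≤ Cst * √(deriv (deriv F) x) * √(deriv (deriv F) y)) (z : ℝ) :
    MemLp (fun x => deriv G (x - z)) 2 ν ∧
      Var[fun x => deriv G (x - z); ν] ≤ (Cst * √(deriv (deriv F) z)) ^ 2 :=
  memLp_two_and_variance_le_of_abs_deriv_le hε hF hG hF'' hGconv hν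
    (hG.deriv'.comp (contDiff_id.sub contDiff_const)) fun x => by
      rw [deriv_comp_sub_const]
      exact (hC x z).trans_eq (by ring)

variable {Z : ℝ → ℝ} {μ : ℝ → Measure ℝ} {Cst κ : ℝ} {φ : ℝ → ℝ}

theorem hasDerivAt_integral_mul_exp_neg_sub_of_abs_deriv_le
    (hε : 0 < ε) (hF : ContDiff ℝ 2 F) (hG : ContDiff ℝ 2 G)
    (hF'' : ∀ x, ε ≤ deriv (deriv F) x) (hGconv : ∀ x, 0 ≤ deriv (deriv G) x)
    (hμ : ∀ y, μ y = volume.withDensity fun x => ENNReal.ofReal (exp (-F x - G (x - y)) / Z y))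
    (hprob : ∀ y, IsProbabilityMeasure (μ y))
    (hC : ∀ x y, |deriv (deriv G) (x - y)|
      ≤ Cst * √(deriv (deriv F) x) * √(deriv (deriv F) y))
    (hφ : ContDiff ℝ 1 φ) (hφκ : ∀ x, |deriv φ x| ≤ κ * √(deriv (deriv F) x)) (y₀ : ℝ) :
    HasDerivAt (fun y => ∫ x, φ x * exp (-F x - G (x - y)))
      (∫ x, φ x * deriv G (x - y₀) * exp (-F x - G (x - y₀))) y₀ := by
  have hmul : ∀ y {g : ℝ → ℝ}, Integrable g (μ y) →
      Integrable fun x => g x * exp (-F x - G (x - y)) := fun y g hg => by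
    have hp : Measurable fun x => exp (-F x - G (x - y)) := by
      have := hF.continuous; have := hG.continuous; fun_prop
    have hp0 : ∀ x, 0 ≤ exp (-F x - G (x - y)) := fun x => (exp_pos _).le
    exact (integrable_withDensity_div_iff (hμ y) hp hp0
      (pos_of_isProbabilityMeasure_withDensity_div (hμ y) hp0)).1 hg
  have hφL2 : ∀ y, MemLp φ 2 (μ y) := fun y =>
    (memLp_two_and_variance_le_of_abs_deriv_le hε hF hG hF'' hGconv (hμ y) hφ hφκ).1
  have hG'L2 : ∀ y z, MemLp (fun x => deriv G (x - z)) 2 (μ y) := fun y z =>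
    (memLp_two_and_variance_le_deriv_comp_sub hε hF hG hF'' hGconv (hμ y) hC z).1
  exact hasDerivAt_integral_mul_exp_neg_sub hF.continuous hG.of_succ
    (monotone_of_deriv_nonneg (hG.deriv'.differentiable one_ne_zero) hGconv) hφ.continuous
    (hmul y₀ ((hφL2 y₀).integrable one_le_two))
    fun y _ z _ => hmul y ((hφL2 y).integrable_mul (hG'L2 y z))

theorem hasDerivAt_integral_eq_covariance
    (hε : 0 < ε) (hF : ContDiff ℝ 2 F) (hG : ContDiff ℝ 2 G)
    (hF'' : ∀ x, ε ≤ deriv (deriv F) x) (hGconv : ∀ x, 0 ≤ deriv (deriv G) x)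
    (hμ : ∀ y, μ y = volume.withDensity fun x => ENNReal.ofReal (exp (-F x - G (x - y)) / Z y))
    (hprob : ∀ y, IsProbabilityMeasure (μ y))
    (hC : ∀ x y, |deriv (deriv G) (x - y)|
      ≤ Cst * √(deriv (deriv F) x) * √(deriv (deriv F) y))
    (hφ : ContDiff ℝ 1 φ) (hφκ : ∀ x, |deriv φ x| ≤ κ * √(deriv (deriv F) x)) (y₀ : ℝ) :
    HasDerivAt (fun y => ∫ x, φ x ∂(μ y)) cov[φ, fun x => deriv G (x - y₀); μ y₀] y₀ := by
  have hp : ∀ y, Measurable fun x => exp (-F x - G (x - y)) := fun y => by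
    have := hF.continuous; have := hG.continuous; fun_prop
  have hp0 : ∀ y x, 0 ≤ exp (-F x - G (x - y)) := fun y x => (exp_pos _).le
  have hZ : ∀ y, 0 < Z y := fun y => pos_of_isProbabilityMeasure_withDensity_div (hμ y) (hp0 y)
  have hE : ∀ y (g : ℝ → ℝ), ∫ x, g x ∂(μ y) = (∫ x, g x * exp (-F x - G (x - y))) / Z y :=
    fun y => integral_withDensity_div (hμ y) (hp y) (hp0 y) (hZ y)
  have hZeq : ∀ y, ∫ x, 1 * exp (-F x - G (x - y)) = Z y := fun y => by
    simpa using (integrable_and_integral_eq_of_isProbabilityMeasure_withDensity_div (hμ y) (hp y)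
      (hp0 y)).2
  have hN1 := hasDerivAt_integral_mul_exp_neg_sub_of_abs_deriv_le hε hF hG hF'' hGconv hμ hprob
    hC (contDiff_const (c := (1 : ℝ))) (κ := 0) (fun x => by simp) y₀
  have hNφ := hasDerivAt_integral_mul_exp_neg_sub_of_abs_deriv_le hε hF hG hF'' hGconv hμ hprob
    hC hφ hφκ y₀
  have hquot := hNφ.div hN1 (by rw [hZeq]; exact (hZ y₀).ne')
  simp only [hZeq] at hquot
  rw [show (fun y => ∫ x, φ x ∂(μ y)) = _ from funext fun y => hE y φ]
  refine hquot.congr_deriv ?_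
  obtain ⟨hφL2, -⟩ := memLp_two_and_variance_le_of_abs_deriv_le hε hF hG hF'' hGconv (hμ y₀) hφ hφκ
  obtain ⟨hgL2, -⟩ := memLp_two_and_variance_le_deriv_comp_sub hε hF hG hF'' hGconv (hμ y₀) hC y₀
  rw [covariance_eq_sub hφL2 hgL2, hE, hE, hE]
  field_simp [(hZ y₀).ne']
  simp only [Pi.mul_apply]
  ring

end ConditionalMeasure

theorem one_point_dobrushin_estimate_general
    (F G : ℝ → ℝ) (ε : ℝ) (hε : 0 < ε)
    (hF : ContDiff ℝ 2 F) (hG : ContDiff ℝ 2 G)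
    (hF'' : ∀ x, ε ≤ deriv (deriv F) x)
    (hGconv : ∀ x, 0 ≤ deriv (deriv G) x)
    (Z : ℝ → ℝ)
    (μ : ℝ → Measure ℝ)
    (hμ : ∀ y, μ y = (volume : Measure ℝ).withDensity
      (fun x => ENNReal.ofReal (Real.exp (-F x - G (x - y)) / Z y)))
    (hprob : ∀ y, IsProbabilityMeasure (μ y))
    (Cst : ℝ)
    (hC : ∀ x y, |deriv (deriv G) (x - y)|
      ≤ Cst * Real.sqrt (deriv (deriv F) x) * Real.sqrt (deriv (deriv F) y))
    (f : ℝ → ℝ) (hf : ContDiff ℝ 1 f)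
    (δ : ℝ) (hδ : ∀ x, |deriv f x| ≤ δ * Real.sqrt (deriv (deriv F) x)) :
    ∃ d : ℝ → ℝ,
      (∀ y, HasDerivAt (fun y' => ∫ x, f x ∂(μ y')) (d y) y) ∧
      (∀ y, |d y| ≤ Cst * δ * Real.sqrt (deriv (deriv F) y)) := by
  refine ⟨fun y => cov[f, fun x => deriv G (x - y); μ y],
    hasDerivAt_integral_eq_covariance hε hF hG hF'' hGconv hμ hprob hC hf hδ, fun y => ?_⟩
  have hsqrt : ∀ x, 0 < √(deriv (deriv F) x) := fun x => sqrt_pos.2 (hε.trans_le (hF'' x))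
  have hδ0 : 0 ≤ δ := nonneg_of_mul_nonneg_left ((abs_nonneg _).trans (hδ 0)) (hsqrt 0)
  have hC0 : 0 ≤ Cst := nonneg_of_mul_nonneg_left
    (((abs_nonneg _).trans (hC y y)).trans_eq (mul_assoc _ _ _)) (mul_pos (hsqrt y) (hsqrt y))
  obtain ⟨hfL2, hfVar⟩ :=
    memLp_two_and_variance_le_of_abs_deriv_le hε hF hG hF'' hGconv (hμ y) hf hδ
  obtain ⟨hgL2, hgVar⟩ := memLp_two_and_variance_le_deriv_comp_sub hε hF hG hF'' hGconv (hμ y) hC y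
  refine abs_le_of_sq_le_sq ?_ (by have := hsqrt y; positivity)
  calc cov[f, fun x => deriv G (x - y); μ y] ^ 2
      ≤ Var[f; μ y] * Var[fun x => deriv G (x - y); μ y] := sq_covariance_le_variance_mul hfL2 hgL2
    _ ≤ δ ^ 2 * (Cst * √(deriv (deriv F) y)) ^ 2 :=
        mul_le_mul hfVar hgVar (variance_nonneg _ _) (sq_nonneg _)
    _ = (Cst * δ * √(deriv (deriv F) y)) ^ 2 := by ring

/-- The key one-point (Dobrushin coefficient) estimate: for the conditional
measures `dμ_y ∝ exp(-F(x) - G(x-y)) dx` with `F'' ≥ ε > 0` and `G` convex,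
and `f` with `δ(f) = sup |f'/√F''| ≤ δ`,
`C = sup_{x,y} |G''(x-y)|/(√F''(x)√F''(y))`, the map
`y ↦ ∫ f dμ_y` is differentiable with
`|d/dy ∫ f dμ_y| ≤ C δ √(F''(y))`. -/
theorem one_point_dobrushin_estimate
    (F G : ℝ → ℝ) (ε : ℝ) (hε : 0 < ε)
    (hF : ContDiff ℝ 2 F) (hG : ContDiff ℝ 2 G)
    (hF'' : ∀ x, ε ≤ deriv (deriv F) x)
    (hGconv : ∀ x, 0 ≤ deriv (deriv G) x)
    (Z : ℝ → ℝ) (hZ : ∀ y, Z y = ∫ x, Real.exp (-F x - G (x - y)))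
    (μ : ℝ → Measure ℝ)
    (hμ : ∀ y, μ y = (volume : Measure ℝ).withDensity
      (fun x => ENNReal.ofReal (Real.exp (-F x - G (x - y)) / Z y)))
    (hprob : ∀ y, IsProbabilityMeasure (μ y))
    (Cst : ℝ)
    (hC : ∀ x y, |deriv (deriv G) (x - y)|
      ≤ Cst * Real.sqrt (deriv (deriv F) x) * Real.sqrt (deriv (deriv F) y))
    (f : ℝ → ℝ) (hf : ContDiff ℝ 1 f)
    (δ : ℝ) (hδ : ∀ x, |deriv f x| ≤ δ * Real.sqrt (deriv (deriv F) x)) :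
    ∃ d : ℝ → ℝ,
      (∀ y, HasDerivAt (fun y' => ∫ x, f x ∂(μ y')) (d y) y) ∧
      (∀ y, |d y| ≤ Cst * δ * Real.sqrt (deriv (deriv F) y)) :=
  one_point_dobrushin_estimate_general F G ε hε hF hG hF'' hGconv Z μ hμ hprob Cst hC f hf δ hδ
end
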